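/- arXiv:1703.08254 — 4 statements merged into one kernel-verified Lean document; each statement's English description precedes it below -/
import Mathlib

section
/- Suppose (x̂, ê) ∈ ℂ^N × ℂ^α and q̂ ∈ ℂ^N are such that q̂ is dual feasible and strong duality holds, i.e. P(x̂, ê) = D(q̂). Suppose moreover that x̂ admits an atomic decomposition achieving its atomic norm: x̂ = Σ_{k=1}^K c_k a(f_k, φ_k) with K ∈ ℕ, c_k > 0, f_k ∈ [0,1), φ_k ∈ [0,2π), and Σ_{k=1}^K c_k = ‖x̂‖_A. Then (i) the dual polynomial Y(f) = ⟨q̂, a(f,0)⟩ satisfies Y(f_k) = γ · e^{iφ_k} for every k = 1,…,K, and (ii) for every j ∈ {1,…,α} with ê_j ≠ 0 one has q̂_{t_j} = λ · ê_j / |ê_j|. -/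
noncomputable section

/-- The atom `a(f,φ) ∈ ℂ^N` with entries `exp(i(2πf·t + φ))`, `t = 0,…,N-1`. -/
def atom (N : ℕ) (f φ : ℝ) : Fin N → ℂ :=
  fun t => Complex.exp (Complex.I * Complex.ofReal (2 * Real.pi * f * (t : ℕ) + φ))

/-- The atomic norm `‖x‖_A`. -/
def atomicNorm (N : ℕ) (x : Fin N → ℂ) : ℝ :=
  sInf { r : ℝ | ∃ (K : ℕ) (c : Fin K → ℝ) (f : Fin K → ℝ) (φ : Fin K → ℝ),
    (∀ k, 0 ≤ c k) ∧ (∀ k, f k ∈ Set.Ico (0 : ℝ) 1) ∧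
    (∀ k, φ k ∈ Set.Ico (0 : ℝ) (2 * Real.pi)) ∧
    (x = ∑ k, fun t => (c k : ℂ) * atom N (f k) (φ k) t) ∧ r = ∑ k, c k }

/-- `⟨q,x⟩ = Σ_t q_t · conj(x_t)`. -/
def cinner (N : ℕ) (q x : Fin N → ℂ) : ℂ :=
  ∑ t, q t * (starRingEnd ℂ) (x t)

/-- `⟨q,x⟩_ℝ = Re⟨q,x⟩`. -/
def rinner (N : ℕ) (q x : Fin N → ℂ) : ℝ := (cinner N q x).re

/-- The dual atomic norm `‖q‖_A^* = sup {⟨q,x⟩_ℝ : ‖x‖_A ≤ 1}`. -/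
def dualAtomicNorm (N : ℕ) (q : Fin N → ℂ) : ℝ :=
  sSup { r : ℝ | ∃ x : Fin N → ℂ, atomicNorm N x ≤ 1 ∧ r = rinner N q x }

/-- `‖e‖₁ = Σ_j |e_j|`. -/
def l1 (n : ℕ) (e : Fin n → ℂ) : ℝ := ∑ j, ‖e j‖

/-- `‖e‖₂² = Σ_j |e_j|²`. -/
def l2sq (n : ℕ) (e : Fin n → ℂ) : ℝ := ∑ j, ‖e j‖ ^ 2

/-- The primal objective `P(x,e) = γ‖x‖_A + λ‖e‖₁ + ½‖z̃ − x(Ω) − e‖₂²`,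
where `Ω` is encoded by the strictly monotone index map `ι : Fin α → Fin N`. -/
def primalObj (N α : ℕ) (ι : Fin α → Fin N) (ztil : Fin α → ℂ) (γ lam : ℝ)
    (x : Fin N → ℂ) (e : Fin α → ℂ) : ℝ :=
  γ * atomicNorm N x + lam * l1 α e +
    (1 / 2) * l2sq α (fun j => ztil j - x (ι j) - e j)

/-- The dual objective `D(q) = ⟨q(Ω), z̃⟩_ℝ − ½‖q‖₂²`. -/
def dualObj (N α : ℕ) (ι : Fin α → Fin N) (ztil : Fin α → ℂ) (q : Fin N → ℂ) : ℝ :=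
  rinner α (fun j => q (ι j)) ztil - (1 / 2) * l2sq N q

/-- Dual feasibility: `‖q‖_A^* ≤ γ`, `‖q‖_∞ ≤ λ`, and `q` vanishes off `Ω`. -/
def dualFeasible (N α : ℕ) (ι : Fin α → Fin N) (γ lam : ℝ) (q : Fin N → ℂ) : Prop :=
  dualAtomicNorm N q ≤ γ ∧ (∀ t, ‖q t‖ ≤ lam) ∧
    (∀ t : Fin N, (∀ j, ι j ≠ t) → q t = 0)

/-! For dual-feasible `q̂` the duality gap `P(x̂,ê) − D(q̂)` splits into
`Σ_k c_k (γ − Re⟨q̂, a_k⟩) + Σ_j (λ|ê_j| − Re(q̂_{t_j} conj ê_j)) + ½‖q̂(Ω) − (z̃ − x̂(Ω) − ê)‖²`,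
where every summand is nonnegative because `|⟨q̂, a⟩| ≤ ‖q̂‖_A^* ≤ γ` and `|q̂_t| ≤ λ`. Strong duality
forces all of them to vanish, and a complex number whose real part attains an upper bound on its
modulus equals that real bound; this gives `⟨q̂, a_k⟩ = γ` and `q̂_{t_j} conj ê_j = λ|ê_j|`.

The bound `|⟨q̂, a⟩| ≤ ‖q̂‖_A^*` needs the supremum defining the dual norm to be bounded, hence that
every vector of `ℂ^N` has an atomic decomposition. -/

open Finset

lemma Complex.exp_neg_I_mul_arg_mul (z : ℂ) : Complex.exp (-(Complex.I * z.arg)) * z = ‖z‖ := by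
  calc Complex.exp (-(Complex.I * z.arg)) * z
      = Complex.exp (-(Complex.I * z.arg)) * (‖z‖ * Complex.exp (z.arg * Complex.I)) := by
        rw [Complex.norm_mul_exp_arg_mul_I]
    _ = ‖z‖ := by
        rw [mul_left_comm, ← Complex.exp_add, show -(Complex.I * z.arg) + z.arg * Complex.I = 0 by
          ring, Complex.exp_zero, mul_one]

section Atoms

variable {N : ℕ}

lemma norm_atom (f φ : ℝ) (t : Fin N) : ‖atom N f φ t‖ = 1 := by
  rw [atom, Complex.norm_exp_I_mul_ofReal]

lemma atom_eq_exp_mul (f φ : ℝ) (t : Fin N) :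
    atom N f φ t = Complex.exp (Complex.I * φ) * atom N f 0 t := by
  simp only [atom, ← Complex.exp_add]
  push_cast
  ring_nf

lemma atom_toIcoMod (f φ : ℝ) : atom N f (toIcoMod Real.two_pi_pos 0 φ) = atom N f φ := by
  funext t
  rw [atom_eq_exp_mul, atom_eq_exp_mul f φ, ← self_sub_toIcoDiv_zsmul, zsmul_eq_mul]
  have h : Complex.I * ((φ - toIcoDiv Real.two_pi_pos 0 φ * (2 * Real.pi) : ℝ) : ℂ) =
      Complex.I * φ - toIcoDiv Real.two_pi_pos 0 φ * (2 * Real.pi * Complex.I) := by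
    push_cast
    ring
  rw [h, Complex.exp_sub, Complex.exp_int_mul_two_pi_mul_I, div_one]

lemma exists_norm_mul_atom_eq (z : ℂ) (f : ℝ) : ∃ φ ∈ Set.Ico 0 (2 * Real.pi),
    ∀ t, (‖z‖ : ℂ) * atom N f φ t = z * atom N f 0 t := by
  refine ⟨toIcoMod Real.two_pi_pos 0 z.arg,
    by simpa using toIcoMod_mem_Ico Real.two_pi_pos 0 z.arg, fun t => ?_⟩
  rw [atom_toIcoMod, atom_eq_exp_mul, ← mul_assoc, mul_comm Complex.I,
    Complex.norm_mul_exp_arg_mul_I]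

lemma atom_natCast_div_eq_pow (j : ℕ) (t : Fin N) :
    atom N (j / N) 0 t = (Complex.exp (2 * Real.pi * Complex.I / N) ^ (t : ℕ)) ^ j := by
  rw [atom, ← pow_mul, ← Complex.exp_nat_mul]
  push_cast
  ring_nf

lemma exists_eq_sum_mul_atom (x : Fin N → ℂ) :
    ∃ z : Fin N → ℂ, x = ∑ j, fun t => z j * atom N ((j : ℕ) / N) 0 t := by
  set v : Fin N → ℂ := fun t => Complex.exp (2 * Real.pi * Complex.I / N) ^ (t : ℕ)
  have hv : Function.Injective v := fun a b hab =>
    Fin.ext ((Complex.isPrimitiveRoot_exp N a.pos.ne').pow_inj a.isLt b.isLt hab)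
  have hunit : IsUnit (Matrix.vandermonde v) := by
    rw [Matrix.isUnit_iff_isUnit_det, isUnit_iff_ne_zero]
    exact Matrix.det_vandermonde_ne_zero_iff.mpr hv
  obtain ⟨z, hz⟩ := Matrix.mulVec_surjective_iff_isUnit.mpr hunit x
  refine ⟨z, funext fun t => ?_⟩
  simp only [← hz, Matrix.mulVec, dotProduct, Matrix.vandermonde_apply, Finset.sum_apply,
    atom_natCast_div_eq_pow, v]
  exact sum_congr rfl fun j _ => mul_comm _ _

lemma exists_atomic_decomposition (x : Fin N → ℂ) :
    ∃ c f φ : Fin N → ℝ, (∀ k, 0 ≤ c k) ∧ (∀ k, f k ∈ Set.Ico (0 : ℝ) 1) ∧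
      (∀ k, φ k ∈ Set.Ico (0 : ℝ) (2 * Real.pi)) ∧
      x = ∑ k, fun t => (c k : ℂ) * atom N (f k) (φ k) t := by
  obtain ⟨z, rfl⟩ := exists_eq_sum_mul_atom x
  choose φ hφ hz using fun j => exists_norm_mul_atom_eq (N := N) (z j) ((j : ℕ) / N)
  refine ⟨fun j => ‖z j‖, fun j => (j : ℕ) / N, φ, fun j => norm_nonneg _, fun j => ⟨by positivity,
    (div_lt_one (by exact_mod_cast j.pos)).mpr (by exact_mod_cast j.isLt)⟩, hφ, ?_⟩
  simp only [hz]

end Atoms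

section AtomicNorm

variable {N : ℕ} {x : Fin N → ℂ}

lemma atomicNorm_le_sum {K : ℕ} {c f φ : Fin K → ℝ} (hc : ∀ k, 0 ≤ c k)
    (hf : ∀ k, f k ∈ Set.Ico (0 : ℝ) 1) (hφ : ∀ k, φ k ∈ Set.Ico (0 : ℝ) (2 * Real.pi))
    (hx : x = ∑ k, fun t => (c k : ℂ) * atom N (f k) (φ k) t) : atomicNorm N x ≤ ∑ k, c k := by
  refine csInf_le ⟨0, ?_⟩ ⟨K, c, f, φ, hc, hf, hφ, hx, rfl⟩
  rintro r ⟨K, c, -, -, hc, -, -, -, rfl⟩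
  exact sum_nonneg fun k _ => hc k

lemma exists_atomic_decomposition_sum_lt {r : ℝ} (h : atomicNorm N x < r) :
    ∃ (K : ℕ) (c f φ : Fin K → ℝ), (∀ k, 0 ≤ c k) ∧
      x = (∑ k, fun t => (c k : ℂ) * atom N (f k) (φ k) t) ∧ ∑ k, c k < r := by
  obtain ⟨c, f, φ, hc, hf, hφ, hx⟩ := exists_atomic_decomposition x
  rw [atomicNorm] at h
  obtain ⟨_, ⟨K, c, f, φ, hc, -, -, hx, rfl⟩, hlt⟩ :=
    (exists_lt_of_csInf_lt · h) ⟨_, N, c, f, φ, hc, hf, hφ, hx, rfl⟩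
  exact ⟨K, c, f, φ, hc, hx, hlt⟩

lemma atomicNorm_atom_le_one {f φ : ℝ} (hf : f ∈ Set.Ico (0 : ℝ) 1)
    (hφ : φ ∈ Set.Ico (0 : ℝ) (2 * Real.pi)) : atomicNorm N (atom N f φ) ≤ 1 := by
  simpa using atomicNorm_le_sum (K := 1) (c := 1) (fun _ => zero_le_one) (fun _ => hf)
    (fun _ => hφ) (by simp)

end AtomicNorm

section Inner

variable {N : ℕ} (q : Fin N → ℂ)

lemma cinner_sum_mul_atom {K : ℕ} (c f φ : Fin K → ℝ) :
    cinner N q (∑ k, fun t => (c k : ℂ) * atom N (f k) (φ k) t) =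
      ∑ k, (c k : ℂ) * cinner N q (atom N (f k) (φ k)) := by
  simp only [cinner, Finset.sum_apply, map_sum, map_mul, Complex.conj_ofReal, mul_sum]
  rw [sum_comm]
  exact sum_congr rfl fun k _ => sum_congr rfl fun t _ => by ring

lemma rinner_sum_mul_atom {K : ℕ} (c f φ : Fin K → ℝ) :
    rinner N q (∑ k, fun t => (c k : ℂ) * atom N (f k) (φ k) t) =
      ∑ k, c k * rinner N q (atom N (f k) (φ k)) := by
  simp only [rinner, cinner_sum_mul_atom, Complex.re_sum, Complex.re_ofReal_mul]

lemma norm_cinner_atom_le (f φ : ℝ) : ‖cinner N q (atom N f φ)‖ ≤ ∑ t, ‖q t‖ :=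
  (norm_sum_le _ _).trans_eq <| sum_congr rfl fun t _ => by
    rw [norm_mul, Complex.norm_conj, norm_atom, mul_one]

lemma cinner_atom (f φ : ℝ) :
    cinner N q (atom N f φ) = Complex.exp (-(Complex.I * φ)) * cinner N q (atom N f 0) := by
  simp only [cinner, mul_sum]
  refine sum_congr rfl fun t _ => ?_
  rw [atom_eq_exp_mul f φ, map_mul, ← Complex.exp_conj, map_mul, Complex.conj_I,
    Complex.conj_ofReal]
  ring_nf

lemma rinner_le_mul_of_atomicNorm_lt {x : Fin N → ℂ} {r : ℝ} (h : atomicNorm N x < r) :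
    rinner N q x ≤ r * ∑ t, ‖q t‖ := by
  obtain ⟨K, c, f, φ, hc, rfl, hlt⟩ := exists_atomic_decomposition_sum_lt h
  rw [rinner_sum_mul_atom]
  calc ∑ k, c k * rinner N q (atom N (f k) (φ k))
      ≤ ∑ k, c k * ∑ t, ‖q t‖ := sum_le_sum fun k _ => mul_le_mul_of_nonneg_left
        ((Complex.re_le_norm _).trans (norm_cinner_atom_le q _ _)) (hc k)
    _ ≤ r * ∑ t, ‖q t‖ := by
        rw [← sum_mul]
        exact mul_le_mul_of_nonneg_right hlt.le (sum_nonneg fun t _ => norm_nonneg _)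

lemma rinner_atom_le_dualAtomicNorm {f φ : ℝ} (hf : f ∈ Set.Ico (0 : ℝ) 1)
    (hφ : φ ∈ Set.Ico (0 : ℝ) (2 * Real.pi)) :
    rinner N q (atom N f φ) ≤ dualAtomicNorm N q := by
  refine le_csSup ⟨2 * ∑ t, ‖q t‖, ?_⟩ ⟨atom N f φ, atomicNorm_atom_le_one hf hφ, rfl⟩
  rintro r ⟨x, hx, rfl⟩
  exact rinner_le_mul_of_atomicNorm_lt q (hx.trans_lt one_lt_two)

lemma norm_cinner_atom_le_dualAtomicNorm {f : ℝ} (hf : f ∈ Set.Ico (0 : ℝ) 1) (φ : ℝ) :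
    ‖cinner N q (atom N f φ)‖ ≤ dualAtomicNorm N q := by
  set w := cinner N q (atom N f 0)
  have hrot : ‖cinner N q (atom N f φ)‖ = ‖w‖ := by
    rw [cinner_atom, norm_mul, Complex.norm_exp]
    simp [w]
  have haligned : rinner N q (atom N f (toIcoMod Real.two_pi_pos 0 w.arg)) = ‖w‖ := by
    rw [rinner, atom_toIcoMod, cinner_atom, Complex.exp_neg_I_mul_arg_mul, Complex.ofReal_re]
  rw [hrot, ← haligned]
  exact rinner_atom_le_dualAtomicNorm q hf
    (by simpa using toIcoMod_mem_Ico Real.two_pi_pos 0 w.arg)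

lemma mul_atomicNorm_sub_rinner {x : Fin N → ℂ} {K : ℕ} {c f φ : Fin K → ℝ} (γ : ℝ)
    (hx : x = ∑ k, fun t => (c k : ℂ) * atom N (f k) (φ k) t) (hnorm : ∑ k, c k = atomicNorm N x) :
    γ * atomicNorm N x - rinner N q x = ∑ k, c k * (γ - rinner N q (atom N (f k) (φ k))) := by
  rw [← hnorm, hx, rinner_sum_mul_atom, mul_sum, ← sum_sub_distrib]
  exact sum_congr rfl fun k _ => by ring

end Inner

lemma primalObj_sub_dualObj {N α : ℕ} {ι : Fin α → Fin N} (hι : Function.Injective ι)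
    (ztil : Fin α → ℂ) (γ lam : ℝ) (x : Fin N → ℂ) (e : Fin α → ℂ) {q : Fin N → ℂ}
    (hq : ∀ t, (∀ j, ι j ≠ t) → q t = 0) :
    primalObj N α ι ztil γ lam x e - dualObj N α ι ztil q =
      (γ * atomicNorm N x - rinner N q x) +
        ∑ j, (lam * ‖e j‖ - (q (ι j) * starRingEnd ℂ (e j)).re) +
        ∑ j, ‖q (ι j) - (ztil j - x (ι j) - e j)‖ ^ 2 / 2 := by
  have restrict (g : Fin N → ℝ) (hg : ∀ t, q t = 0 → g t = 0) : ∑ t, g t = ∑ j, g (ι j) :=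
    (Fintype.sum_of_injective ι hι _ g (fun t ht => hg t (hq t fun j hj => ht ⟨j, hj⟩))
      fun _ => rfl).symm
  have hx : rinner N q x = ∑ j, (q (ι j) * starRingEnd ℂ (x (ι j))).re := by
    rw [rinner, cinner, Complex.re_sum]
    exact restrict _ fun t ht => by simp [ht]
  have hq2 : l2sq N q = ∑ j, ‖q (ι j)‖ ^ 2 := restrict _ fun t ht => by simp [ht]
  have hz (j : Fin α) : (q (ι j) * starRingEnd ℂ (ztil j)).re =
      (q (ι j) * starRingEnd ℂ (x (ι j))).re + (q (ι j) * starRingEnd ℂ (e j)).re +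
        (q (ι j) * starRingEnd ℂ (ztil j - x (ι j) - e j)).re := by
    simp only [map_sub, mul_sub, Complex.sub_re]
    ring
  have hsq (j : Fin α) : ‖q (ι j) - (ztil j - x (ι j) - e j)‖ ^ 2 / 2 =
      ‖q (ι j)‖ ^ 2 / 2 + ‖ztil j - x (ι j) - e j‖ ^ 2 / 2 -
        (q (ι j) * starRingEnd ℂ (ztil j - x (ι j) - e j)).re := by
    simp only [Complex.sq_norm, Complex.normSq_sub]
    ring
  rw [primalObj, dualObj, hx, hq2]
  simp only [l1, l2sq, rinner, cinner, Complex.re_sum, hz, hsq, sum_add_distrib, sum_sub_distrib,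
    mul_sum, one_div_mul_eq_div]
  ring

lemma Complex.eq_ofReal_of_re_eq_of_norm_le {z : ℂ} {b : ℝ} (hre : z.re = b) (hle : ‖z‖ ≤ b) :
    z = b := by
  have him : z.im = 0 := Complex.abs_re_eq_norm.mp <|
    (Complex.abs_re_le_norm z).antisymm (hre ▸ hle.trans (le_abs_self b))
  exact Complex.ext (by simp [hre]) (by simp [him])

lemma Complex.eq_mul_div_norm_of_mul_conj_eq {q e : ℂ} (he : e ≠ 0) {l : ℝ}
    (h : q * starRingEnd ℂ e = (l * ‖e‖ : ℝ)) : q = l * e / ‖e‖ := by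
  have hnorm : (‖e‖ : ℂ) ≠ 0 := by exact_mod_cast norm_ne_zero_iff.mpr he
  rw [eq_div_iff hnorm]
  refine mul_right_cancel₀ hnorm ?_
  calc q * ‖e‖ * ‖e‖ = q * (starRingEnd ℂ e * e) := by rw [Complex.conj_mul', sq, mul_assoc]
    _ = l * e * ‖e‖ := by rw [← mul_assoc, h]; push_cast; ring

theorem lemma1_dual_certificate_general
    (N α : ℕ) (ι : Fin α → Fin N) (hι : StrictMono ι)
    (ztil : Fin α → ℂ) (γ lam : ℝ)
    (xhat : Fin N → ℂ) (ehat : Fin α → ℂ) (qhat : Fin N → ℂ)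
    (hfeas : dualFeasible N α ι γ lam qhat)
    (hstrong : primalObj N α ι ztil γ lam xhat ehat = dualObj N α ι ztil qhat)
    (K : ℕ) (c f φ : Fin K → ℝ)
    (hc : ∀ k, 0 < c k)
    (hf : ∀ k, f k ∈ Set.Ico (0 : ℝ) 1)
    (hdecomp : xhat = ∑ k, fun t => (c k : ℂ) * atom N (f k) (φ k) t)
    (hachieve : ∑ k, c k = atomicNorm N xhat) :
    (∀ k, cinner N qhat (atom N (f k) 0) = (γ : ℂ) * Complex.exp (Complex.I * (φ k : ℂ))) ∧
    (∀ j, ehat j ≠ 0 → qhat (ι j) = (lam : ℂ) * ehat j / (‖ehat j‖ : ℂ)) := by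
  obtain ⟨hdual, hinf, hsupp⟩ := hfeas
  have hatom (k : Fin K) : ‖cinner N qhat (atom N (f k) (φ k))‖ ≤ γ :=
    (norm_cinner_atom_le_dualAtomicNorm qhat (hf k) (φ k)).trans hdual
  have hcoupling (j : Fin α) : ‖qhat (ι j) * starRingEnd ℂ (ehat j)‖ ≤ lam * ‖ehat j‖ := by
    rw [norm_mul, Complex.norm_conj]
    gcongr
    exact hinf (ι j)
  have hgap := primalObj_sub_dualObj hι.injective ztil γ lam xhat ehat hsupp
  rw [hstrong, sub_self, mul_atomicNorm_sub_rinner qhat γ hdecomp hachieve] at hgap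
  have hA : ∀ k ∈ univ, 0 ≤ c k * (γ - rinner N qhat (atom N (f k) (φ k))) := fun k _ =>
    mul_nonneg (hc k).le (sub_nonneg.mpr ((Complex.re_le_norm _).trans (hatom k)))
  have hB : ∀ j ∈ univ, 0 ≤ lam * ‖ehat j‖ - (qhat (ι j) * starRingEnd ℂ (ehat j)).re :=
    fun j _ => sub_nonneg.mpr ((Complex.re_le_norm _).trans (hcoupling j))
  have hC := sum_nonneg fun j (_ : j ∈ univ) =>
    div_nonneg (sq_nonneg ‖qhat (ι j) - (ztil j - xhat (ι j) - ehat j)‖) zero_le_two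
  have hA0 := (sum_eq_zero_iff_of_nonneg hA).mp (by linarith [sum_nonneg hA, sum_nonneg hB])
  have hB0 := (sum_eq_zero_iff_of_nonneg hB).mp (by linarith [sum_nonneg hA, sum_nonneg hB])
  refine ⟨fun k => ?_, fun j hj => ?_⟩
  · have hre : rinner N qhat (atom N (f k) (φ k)) = γ := by
      have := (mul_eq_zero.mp (hA0 k (mem_univ k))).resolve_left (hc k).ne'
      linarith
    have hY := Complex.eq_ofReal_of_re_eq_of_norm_le hre (hatom k)
    rw [cinner_atom, Complex.exp_neg, inv_mul_eq_iff_eq_mul₀ (Complex.exp_ne_zero _)] at hY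
    rw [hY, mul_comm]
  · refine Complex.eq_mul_div_norm_of_mul_conj_eq hj
      (Complex.eq_ofReal_of_re_eq_of_norm_le ?_ (hcoupling j))
    linarith [hB0 j (mem_univ j)]

/-- **Lemma 1.** If `q̂` is dual feasible, strong duality `P(x̂,ê) = D(q̂)` holds, and `x̂`
admits an atomic decomposition achieving its atomic norm, then the dual polynomial
satisfies `Y(f_k) = γ e^{iφ_k}` for every `k`, and `q̂_{t_j} = λ · sign(ê_j)` whenever
`ê_j ≠ 0`. -/
theorem lemma1_dual_certificate
    (N α : ℕ) (hN : 0 < N) (ι : Fin α → Fin N) (hι : StrictMono ι)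
    (ztil : Fin α → ℂ) (γ lam : ℝ) (hγ : 0 < γ) (hlam : 0 < lam)
    (xhat : Fin N → ℂ) (ehat : Fin α → ℂ) (qhat : Fin N → ℂ)
    (hfeas : dualFeasible N α ι γ lam qhat)
    (hstrong : primalObj N α ι ztil γ lam xhat ehat = dualObj N α ι ztil qhat)
    (K : ℕ) (c f φ : Fin K → ℝ)
    (hc : ∀ k, 0 < c k)
    (hf : ∀ k, f k ∈ Set.Ico (0 : ℝ) 1)
    (hφ : ∀ k, φ k ∈ Set.Ico (0 : ℝ) (2 * Real.pi))
    (hdecomp : xhat = ∑ k, fun t => (c k : ℂ) * atom N (f k) (φ k) t)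
    (hachieve : ∑ k, c k = atomicNorm N xhat) :
    (∀ k, cinner N qhat (atom N (f k) 0) = (γ : ℂ) * Complex.exp (Complex.I * (φ k : ℂ))) ∧
    (∀ j, ehat j ≠ 0 → qhat (ι j) = (lam : ℂ) * ehat j / (‖ehat j‖ : ℂ)) :=
  lemma1_dual_certificate_general N α ι hι ztil γ lam xhat ehat qhat hfeas hstrong K c f φ hc hf
    hdecomp hachieve
end
end

section
/- Complex soft-thresholding solves the ℓ₁-regularized denoising problem: let λ > 0 and v ∈ ℂ^α, and define ê ∈ ℂ^α componentwise by ê_j = (|v_j| − λ)·(v_j/|v_j|) if |v_j| > λ, and ê_j = 0 otherwise. Then for every e ∈ ℂ^α, λ‖ê‖₁ + ½‖v − ê‖₂² ≤ λ‖e‖₁ + ½‖v − e‖₂², with equality only when e = ê; i.e., ê is the unique minimizer of e ↦ λ‖e‖₁ + ½‖v − e‖₂² over ℂ^α. -/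
/-!
The objective splits into the scalar problems `z ↦ λ‖z‖ + ½‖v_j - z‖²`, so it suffices to treat
one coordinate, and there ℂ may be replaced by any real inner product space. Write
`F(z) = λ‖z‖ + ½‖v - z‖²` and `w` for the soft-threshold of `v`. The residual `u = v - w`
satisfies `‖u‖ ≤ λ` and `⟪u, w⟫ = λ‖w‖`, i.e. `u` is a subgradient of `λ‖·‖` at `w`; expanding
`‖v - z‖² = ‖u - (z - w)‖²` then gives `F(w) + ½‖z - w‖² ≤ F(z)`, which is both the
minimality and the uniqueness.
-/

noncomputable section

open RealInnerProductSpace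

section InnerProductSpace

variable {E : Type*} [NormedAddCommGroup E] [InnerProductSpace ℝ E]

def denoiseObjective (lam : ℝ) (v z : E) : ℝ := lam * ‖z‖ + 1 / 2 * ‖v - z‖ ^ 2

def softThreshold (lam : ℝ) (v : E) : E := if lam < ‖v‖ then (1 - lam / ‖v‖) • v else 0

theorem denoiseObjective_add_half_sq_le {lam : ℝ} {v w : E} (hnorm : ‖v - w‖ ≤ lam)
    (hinner : ⟪v - w, w⟫ = lam * ‖w‖) (z : E) :
    denoiseObjective lam v w + 1 / 2 * ‖z - w‖ ^ 2 ≤ denoiseObjective lam v z := by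
  have hsubgrad : ⟪v - w, z - w⟫ ≤ lam * ‖z‖ - lam * ‖w‖ := by
    have := (real_inner_le_norm (v - w) z).trans
      (mul_le_mul_of_nonneg_right hnorm (norm_nonneg z))
    rw [inner_sub_right, hinner]
    linarith
  have hexpand : ‖v - z‖ ^ 2 = ‖v - w‖ ^ 2 - 2 * ⟪v - w, z - w⟫ + ‖z - w‖ ^ 2 := by
    rw [← norm_sub_sq_real, sub_sub_sub_cancel_right]
  unfold denoiseObjective
  rw [hexpand]
  linarith

theorem norm_sub_softThreshold_le {lam : ℝ} (hlam : 0 ≤ lam) (v : E) :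
    ‖v - softThreshold lam v‖ ≤ lam := by
  unfold softThreshold
  split_ifs with h
  · have hv : 0 < ‖v‖ := hlam.trans_lt h
    rw [← one_smul ℝ v, smul_smul, mul_one, ← sub_smul, one_smul, sub_sub_cancel, norm_smul,
      Real.norm_of_nonneg (by positivity), div_mul_cancel₀ lam hv.ne']
  · simpa using not_lt.mp h

theorem inner_sub_softThreshold {lam : ℝ} (hlam : 0 ≤ lam) (v : E) :
    ⟪v - softThreshold lam v, softThreshold lam v⟫ = lam * ‖softThreshold lam v‖ := by
  unfold softThreshold
  split_ifs with h
  · have hv : 0 < ‖v‖ := hlam.trans_lt h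
    have hcoef : 0 ≤ 1 - lam / ‖v‖ := by
      rw [sub_nonneg, div_le_one hv]
      exact h.le
    have hres : v - (1 - lam / ‖v‖) • v = (lam / ‖v‖) • v := by
      rw [sub_smul, one_smul, sub_sub_cancel]
    rw [hres, real_inner_smul_left, real_inner_smul_right, real_inner_self_eq_norm_sq, norm_smul,
      Real.norm_of_nonneg hcoef]
    field_simp
  · simp

theorem denoiseObjective_softThreshold_add_half_sq_le {lam : ℝ} (hlam : 0 ≤ lam) (v z : E) :
    denoiseObjective lam v (softThreshold lam v) + 1 / 2 * ‖z - softThreshold lam v‖ ^ 2 ≤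
      denoiseObjective lam v z :=
  denoiseObjective_add_half_sq_le (norm_sub_softThreshold_le hlam v)
    (inner_sub_softThreshold hlam v) z

theorem denoiseObjective_softThreshold_le {lam : ℝ} (hlam : 0 ≤ lam) (v z : E) :
    denoiseObjective lam v (softThreshold lam v) ≤ denoiseObjective lam v z :=
  (le_add_of_nonneg_right (by positivity)).trans
    (denoiseObjective_softThreshold_add_half_sq_le hlam v z)

theorem eq_softThreshold_of_denoiseObjective_eq {lam : ℝ} (hlam : 0 ≤ lam) {v z : E}
    (h : denoiseObjective lam v (softThreshold lam v) = denoiseObjective lam v z) :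
    z = softThreshold lam v := by
  have hgrowth := denoiseObjective_softThreshold_add_half_sq_le hlam v z
  rw [h] at hgrowth
  rw [← sub_eq_zero, ← norm_eq_zero, ← sq_eq_zero_iff]
  nlinarith [sq_nonneg ‖z - softThreshold lam v‖]

end InnerProductSpace

theorem Complex.softThreshold_eq (lam : ℝ) (v : ℂ) :
    softThreshold lam v =
      if lam < ‖v‖ then ((‖v‖ - lam : ℝ) : ℂ) * (v / (‖v‖ : ℂ)) else 0 := by
  unfold softThreshold
  split_ifs
  · rcases eq_or_ne v 0 with rfl | hv
    · simp
    · have : (‖v‖ : ℂ) ≠ 0 := by exact_mod_cast norm_ne_zero_iff.mpr hv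
      rw [Complex.real_smul]
      push_cast
      field_simp
  · rfl

theorem sum_denoiseObjective_eq (n : ℕ) (lam : ℝ) (v e : Fin n → ℂ) :
    ∑ j, denoiseObjective lam (v j) (e j) =
      lam * l1 n e + 1 / 2 * l2sq n (fun j => v j - e j) := by
  simp only [denoiseObjective, l1, l2sq, Finset.mul_sum, Finset.sum_add_distrib]

/-- Complex soft-thresholding solves the `ℓ₁`-regularized denoising problem: with
`ê_j = (|v_j| − λ)·(v_j/|v_j|)` if `|v_j| > λ` and `ê_j = 0` otherwise, `ê` is the
unique minimizer of `e ↦ λ‖e‖₁ + ½‖v − e‖₂²` over `ℂ^α`. -/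
theorem soft_thresholding_minimizer
    (α : ℕ) (lam : ℝ) (hlam : 0 < lam) (v : Fin α → ℂ)
    (ehat : Fin α → ℂ)
    (hehat : ∀ j, ehat j =
      if lam < ‖v j‖ then
        ((‖v j‖ - lam : ℝ) : ℂ) * (v j / (‖v j‖ : ℂ))
      else 0) :
    ∀ e : Fin α → ℂ,
      (lam * l1 α ehat + (1 / 2) * l2sq α (fun j => v j - ehat j) ≤
        lam * l1 α e + (1 / 2) * l2sq α (fun j => v j - e j)) ∧
      (lam * l1 α ehat + (1 / 2) * l2sq α (fun j => v j - ehat j) =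
        lam * l1 α e + (1 / 2) * l2sq α (fun j => v j - e j) → e = ehat) := by
  obtain rfl : ehat = fun j => softThreshold lam (v j) :=
    funext fun j => (hehat j).trans (Complex.softThreshold_eq lam (v j)).symm
  intro e
  have hle : ∀ j ∈ Finset.univ, denoiseObjective lam (v j) (softThreshold lam (v j)) ≤
      denoiseObjective lam (v j) (e j) :=
    fun j _ => denoiseObjective_softThreshold_le hlam.le (v j) (e j)
  simp only [← sum_denoiseObjective_eq]
  refine ⟨Finset.sum_le_sum hle, fun heq => funext fun j => ?_⟩
  exact eq_softThreshold_of_denoiseObjective_eq hlam.le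
    ((Finset.sum_eq_sum_iff_of_le hle).mp heq j (Finset.mem_univ j))
end
end

section
/- Closed form of the ADMM Toeplitz update: let N be a positive integer, ρ > 0, γ > 0, and let Ψ₀, Υ₀ ∈ ℂ^{N×N} be Hermitian. Define h on { u ∈ ℂ^N : u_0 ∈ ℝ } by h(u) = (γ/2)·u_0 − Re Tr(Υ₀ · Toep(u)) + (ρ/2)·‖Ψ₀ − Toep(u)‖_F². Then h attains its minimum at the unique point u* given by u*_0 = (1/N)·Tr_0(Ψ₀ + Υ₀/ρ) − γ/(2Nρ) and u*_j = (1/(N−j))·Tr_j(Ψ₀ + Υ₀/ρ) for j = 1,…,N−1. -/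
noncomputable section

/-- The Hermitian Toeplitz matrix whose first column is `u` (for `u_0` real):
`(Toep u)_{jk} = u_{j−k}` for `j ≥ k` and `conj(u_{k−j})` for `j < k`. -/
def Toep (N : ℕ) (u : Fin N → ℂ) : Matrix (Fin N) (Fin N) ℂ :=
  Matrix.of fun j k =>
    if k.val ≤ j.val then u ⟨j.val - k.val, lt_of_le_of_lt (Nat.sub_le _ _) j.isLt⟩
    else (starRingEnd ℂ) (u ⟨k.val - j.val, lt_of_le_of_lt (Nat.sub_le _ _) k.isLt⟩)

/-- `Tr_j(M) = Σ_{k=0}^{N−1−j} M_{k+j,k}`, the sum of the entries on the `j`-th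
subdiagonal of `M` (so `Tr_0` is the ordinary trace). -/
def subdiagTr (N : ℕ) (M : Matrix (Fin N) (Fin N) ℂ) (j : ℕ) : ℂ :=
  ∑ k : Fin N, if h : k.val + j < N then M ⟨k.val + j, h⟩ k else 0

/-- Squared Frobenius norm `‖M‖_F² = Σ_{j,k} |M_{jk}|²`. -/
def frobSq (N : ℕ) (M : Matrix (Fin N) (Fin N) ℂ) : ℝ :=
  ∑ j, ∑ k, ‖M j k‖ ^ 2

/-!
Writing `T = Toep N` and `A = Ψ₀ + Υ₀/ρ`, the objective expands around `u*` as
`h(u) - h(u*) = (ρ/2)‖T u - T u*‖_F² + (γ/2) Re(u - u*)_0 + ρ Re⟪T u* - A, T(u - u*)⟫_F`.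
The Frobenius pairing of a Hermitian matrix `B` with a Toeplitz matrix `T w` only sees the
subdiagonal traces of `B`: it is `Σ_j c_j Re⟪Tr_j B, w_j⟫` with `c_0 = 1`, `c_j = 2` otherwise.
Since `Tr_j (T u*) = (N - j) u*_j`, the closed form makes `Tr_j (T u* - A)` vanish for `j ≥ 1`
and equal `-γ/(2ρ)` for `j = 0`, so the linear term cancels; strictness comes from the
injectivity of `T`.
-/

open Finset
open scoped RealInnerProductSpace ComplexConjugate

theorem prox_objective_sub_eq {E : Type*} [NormedAddCommGroup E] [InnerProductSpace ℝ E]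
    {ρ : ℝ} (hρ : ρ ≠ 0) (ψ υ x y : E) :
    ρ / 2 * ‖ψ - x‖ ^ 2 - ⟪υ, x⟫ - (ρ / 2 * ‖ψ - y‖ ^ 2 - ⟪υ, y⟫) =
      ρ / 2 * ‖x - y‖ ^ 2 + ρ * ⟪y - (ψ + ρ⁻¹ • υ), x - y⟫ := by
  have hψx : ψ - x = (ψ - y) - (x - y) := by abel
  have hυ : ⟪υ, x⟫ - ⟪υ, y⟫ = ⟪υ, x - y⟫ := (inner_sub_right υ x y).symm
  have hcross : ⟪y - (ψ + ρ⁻¹ • υ), x - y⟫ = -⟪ψ - y, x - y⟫ - ρ⁻¹ * ⟪υ, x - y⟫ := by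
    rw [show y - (ψ + ρ⁻¹ • υ) = -(ψ - y) - ρ⁻¹ • υ by abel, inner_sub_left, inner_neg_left,
      real_inner_smul_left]
  rw [hψx, norm_sub_sq_real, hcross]
  field_simp
  linear_combination (-2) * hυ

theorem Complex.real_inner_conj_right (a z : ℂ) : ⟪a, conj z⟫ = ⟪conj a, z⟫ := by
  simp only [Complex.inner, Complex.conj_conj, ← map_mul, Complex.conj_re, mul_comm]

theorem Matrix.IsHermitian.im_trace_eq_zero {n : Type*} [Fintype n] {A : Matrix n n ℂ}
    (hA : A.IsHermitian) :
    A.trace.im = 0 := by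
  have h := congrArg Matrix.trace hA.eq
  rw [Matrix.trace_conjTranspose] at h
  exact Complex.conj_eq_iff_im.mp h

def reFrobInner {n : Type*} [Fintype n] (X Y : Matrix n n ℂ) : ℝ :=
  ∑ j, ∑ k, ⟪X j k, Y j k⟫

theorem Matrix.IsHermitian.re_trace_mul {n : Type*} [Fintype n] {A : Matrix n n ℂ}
    (hA : A.IsHermitian) (M : Matrix n n ℂ) :
    (A * M).trace.re = reFrobInner A M := by
  simp only [Matrix.trace, Matrix.diag, Matrix.mul_apply, Complex.re_sum, reFrobInner,
    Complex.inner]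
  rw [Finset.sum_comm]
  refine sum_congr rfl fun j _ => sum_congr rfl fun k _ => ?_
  rw [← hA.apply k j, Complex.star_def, mul_comm]

theorem frobSq_prox_objective_sub_eq {N : ℕ} {ρ : ℝ} (hρ : ρ ≠ 0)
    (Ψ Υ X Y : Matrix (Fin N) (Fin N) ℂ) :
    ρ / 2 * frobSq N (Ψ - X) - reFrobInner Υ X - (ρ / 2 * frobSq N (Ψ - Y) - reFrobInner Υ Y) =
      ρ / 2 * frobSq N (X - Y) + ρ * reFrobInner (Y - (Ψ + (ρ : ℂ)⁻¹ • Υ)) (X - Y) := by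
  simp only [frobSq, reFrobInner, Finset.mul_sum, ← Finset.sum_sub_distrib,
    ← Finset.sum_add_distrib]
  refine sum_congr rfl fun j _ => sum_congr rfl fun k _ => ?_
  simp only [Matrix.sub_apply, Matrix.add_apply, Matrix.smul_apply, smul_eq_mul,
    ← Complex.ofReal_inv, ← Complex.real_smul]
  exact prox_objective_sub_eq hρ _ _ _ _

theorem frobSq_pos {N : ℕ} {M : Matrix (Fin N) (Fin N) ℂ} (hM : M ≠ 0) : 0 < frobSq N M := by
  obtain ⟨j, k, hjk⟩ : ∃ j k, M j k ≠ 0 := by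
    by_contra! h
    exact hM (Matrix.ext h)
  have hrow : 0 < ∑ k, ‖M j k‖ ^ 2 :=
    sum_pos' (fun k _ => by positivity) ⟨k, mem_univ _, pow_pos (norm_pos_iff.mpr hjk) 2⟩
  exact sum_pos' (fun j _ => sum_nonneg fun k _ => by positivity) ⟨j, mem_univ _, hrow⟩

section Toeplitz

variable {N : ℕ}

theorem Toep_apply_of_le (u : Fin N → ℂ) {j k : Fin N} (h : k ≤ j) :
    Toep N u j k = u ⟨j - k, lt_of_le_of_lt (Nat.sub_le _ _) j.isLt⟩ := by
  rw [Toep, Matrix.of_apply, if_pos (show k.val ≤ j.val from h)]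

theorem Toep_apply_of_lt (u : Fin N → ℂ) {j k : Fin N} (h : j < k) :
    Toep N u j k = conj (u ⟨k - j, lt_of_le_of_lt (Nat.sub_le _ _) k.isLt⟩) := by
  rw [Toep, Matrix.of_apply, if_neg (show ¬k.val ≤ j.val from not_le.mpr h)]

theorem Toep_sub (u v : Fin N → ℂ) : Toep N (u - v) = Toep N u - Toep N v := by
  ext j k
  simp only [Toep, Matrix.of_apply, Matrix.sub_apply, Pi.sub_apply]
  split_ifs <;> simp

theorem Toep_injective : Function.Injective (Toep N) := by
  intro u v h
  funext j
  have h0 : (⟨0, j.pos⟩ : Fin N) ≤ j := Nat.zero_le _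
  have hcol := congr_fun (congr_fun h j) ⟨0, j.pos⟩
  simpa [Toep_apply_of_le _ h0] using hcol

theorem isHermitian_Toep {u : Fin N → ℂ} (hN : 0 < N) (hu : (u ⟨0, hN⟩).im = 0) :
    (Toep N u).IsHermitian := by
  refine Matrix.IsHermitian.ext fun j k => ?_
  rcases lt_trichotomy j k with hjk | rfl | hkj
  · rw [Toep_apply_of_le _ hjk.le, Toep_apply_of_lt _ hjk]; rfl
  · rw [Toep_apply_of_le _ le_rfl, Complex.star_def, Complex.conj_eq_iff_im]
    simpa using hu
  · rw [Toep_apply_of_lt _ hkj, Toep_apply_of_le _ hkj.le, Complex.star_def, Complex.conj_conj]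

theorem subdiagTr_sub (X Y : Matrix (Fin N) (Fin N) ℂ) (d : ℕ) :
    subdiagTr N (X - Y) d = subdiagTr N X d - subdiagTr N Y d := by
  simp only [subdiagTr, ← Finset.sum_sub_distrib]
  refine sum_congr rfl fun k _ => ?_
  split_ifs <;> simp

theorem subdiagTr_zero (X : Matrix (Fin N) (Fin N) ℂ) : subdiagTr N X 0 = X.trace := by
  simp [subdiagTr, Matrix.trace]

theorem subdiagTr_Toep (u : Fin N → ℂ) (d : Fin N) :
    subdiagTr N (Toep N u) d = ((N - d : ℕ) : ℂ) * u d := by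
  have hentry : ∀ (k : Fin N) (h : k.val + d < N), Toep N u ⟨k + d, h⟩ k = u d := fun k h => by
    rw [Toep_apply_of_le _ (Fin.le_def.mpr (Nat.le_add_right _ _))]
    congr 1
    ext
    simp
  have hcard : #{k : Fin N | k.val + d < N} = N - d := by
    have h := Fin.card_filter_val_lt (n := N) (m := N - d)
    rw [min_eq_right (Nat.sub_le _ _)] at h
    rw [← h]
    congr 1
    ext k
    simp only [Finset.mem_filter, Finset.mem_univ, true_and]
    omega
  calc subdiagTr N (Toep N u) d = ∑ k : Fin N, if k.val + d < N then u d else 0 := by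
        refine sum_congr rfl fun k _ => ?_
        split_ifs with h
        · exact hentry k h
        · rfl
    _ = ((N - d : ℕ) : ℂ) * u d := by
        rw [Finset.sum_ite, sum_const_zero, add_zero, sum_const, hcard, nsmul_eq_mul]

theorem subdiagTr_Toep_sub_eq_zero {A : Matrix (Fin N) (Fin N) ℂ} {u : Fin N → ℂ} {d : Fin N}
    (hu : u d = ((1 / ((N : ℝ) - d) : ℝ) : ℂ) * subdiagTr N A d) :
    subdiagTr N (Toep N u - A) d = 0 := by
  have hNd : (N : ℝ) - d ≠ 0 := sub_ne_zero.mpr (by exact_mod_cast d.isLt.ne')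
  have hcancel : ((N - d : ℕ) : ℂ) * ((1 / ((N : ℝ) - d) : ℝ) : ℂ) = 1 := by
    push_cast [Nat.cast_sub d.isLt.le]
    exact mul_one_div_cancel (by exact_mod_cast hNd)
  rw [subdiagTr_sub, subdiagTr_Toep, hu, ← mul_assoc, hcancel, one_mul, sub_self]

theorem trace_Toep_sub_eq (hN : 0 < N) {A : Matrix (Fin N) (Fin N) ℂ} {u : Fin N → ℂ}
    {ρ γ : ℝ} (hρ : ρ ≠ 0)
    (hu : u ⟨0, hN⟩ = ((1 / (N : ℝ) : ℝ) : ℂ) * subdiagTr N A 0 - ((γ / (2 * N * ρ) : ℝ) : ℂ)) :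
    (Toep N u - A).trace = ((-(γ / (2 * ρ)) : ℝ) : ℂ) := by
  have hdiag := subdiagTr_Toep u ⟨0, hN⟩
  simp only [Nat.sub_zero] at hdiag
  have hNC : (N : ℂ) ≠ 0 := Nat.cast_ne_zero.mpr hN.ne'
  have hρC : (ρ : ℂ) ≠ 0 := Complex.ofReal_ne_zero.mpr hρ
  rw [← subdiagTr_zero, subdiagTr_sub, hdiag, hu]
  push_cast
  field_simp
  ring

theorem Fin.sum_subdiagonals_eq_sum_tril {M : Type*} [AddCommMonoid M]
    (f : Fin N → Fin N → M) :
    ∑ d : Fin N, ∑ k : Fin N, (if h : k.val + d < N then f ⟨k + d, h⟩ k else 0) =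
      ∑ j : Fin N, ∑ k : Fin N, if k ≤ j then f j k else 0 := by
  rcases Nat.eq_zero_or_pos N with rfl | hN
  · simp
  have : NeZero N := ⟨hN.ne'⟩
  rw [Finset.sum_comm, Finset.sum_comm (f := fun j k => if k ≤ j then f j k else 0)]
  refine sum_congr rfl fun k _ => Fintype.sum_equiv (Equiv.addLeft k) _ _ fun d => ?_
  -- `k + d` wraps around in `Fin N` exactly when the subdiagonal entry does not exist
  show _ = if k ≤ k + d then f (k + d) k else 0
  by_cases h : k.val + d < N
  · have hval : k + d = ⟨k + d, h⟩ := Fin.ext (Fin.val_add_eq_of_add_lt h)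
    rw [dif_pos h, hval, if_pos (Fin.le_def.mpr (Nat.le_add_right _ _))]
  · have hval : (k + d).val = k + d - N := by
      rw [Fin.val_add, Nat.mod_eq_sub_mod (by omega), Nat.mod_eq_of_lt (by omega)]
    rw [dif_neg h, if_neg (by rw [Fin.le_def, hval]; omega)]

theorem reFrobInner_Toep {A : Matrix (Fin N) (Fin N) ℂ} (hA : A.IsHermitian)
    (w : Fin N → ℂ) :
    reFrobInner A (Toep N w) = ∑ d : Fin N, ⟪subdiagTr N A d, w d⟫ +
      ∑ d : Fin N, if d.val = 0 then 0 else ⟪subdiagTr N A d, w d⟫ := by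
  set f : Fin N → Fin N → ℝ :=
    fun j k => ⟪A j k, w ⟨j - k, lt_of_le_of_lt (Nat.sub_le _ _) j.isLt⟩⟫ with hf
  have hf_subdiag : ∀ (d k : Fin N) (h : k.val + d < N), f ⟨k + d, h⟩ k = ⟪A ⟨k + d, h⟩ k, w d⟫ :=
    fun d k h => by simp only [hf, Nat.add_sub_cancel_left]
  have hsubdiag : ∀ d : Fin N, ⟪subdiagTr N A d, w d⟫ =
      ∑ k : Fin N, if h : k.val + d < N then f ⟨k + d, h⟩ k else 0 := fun d => by
    rw [subdiagTr, sum_inner]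
    refine sum_congr rfl fun k _ => ?_
    split_ifs with h
    · exact (hf_subdiag d k h).symm
    · exact inner_zero_left _
  have hlower : ∑ d : Fin N, ⟪subdiagTr N A d, w d⟫ =
      ∑ j : Fin N, ∑ k : Fin N, if k ≤ j then f j k else 0 := by
    simp only [hsubdiag, Fin.sum_subdiagonals_eq_sum_tril]
  have hupper : (∑ d : Fin N, if d.val = 0 then 0 else ⟪subdiagTr N A d, w d⟫) =
      ∑ j : Fin N, ∑ k : Fin N, if j < k then f k j else 0 := by
    rw [Finset.sum_comm (f := fun j k => if j < k then f k j else 0)]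
    calc (∑ d : Fin N, if d.val = 0 then 0 else ⟪subdiagTr N A d, w d⟫)
        = ∑ d : Fin N, ∑ k : Fin N, if h : k.val + d < N then
            (if k < (⟨k + d, h⟩ : Fin N) then f ⟨k + d, h⟩ k else 0) else 0 := by
          refine sum_congr rfl fun d _ => ?_
          by_cases hd : d.val = 0
          · rw [if_pos hd]
            refine (sum_eq_zero fun k _ => ?_).symm
            split_ifs with h hlt <;> first | rfl | (simp only [Fin.lt_def] at hlt; omega)
          · rw [if_neg hd, hsubdiag]
            refine sum_congr rfl fun k _ => ?_
            split_ifs with h hlt <;> first | rfl | (simp only [Fin.lt_def] at hlt; omega)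
      _ = ∑ j : Fin N, ∑ k : Fin N, if k ≤ j then (if k < j then f j k else 0) else 0 :=
          Fin.sum_subdiagonals_eq_sum_tril fun j k => if k < j then f j k else 0
      _ = ∑ j : Fin N, ∑ k : Fin N, if k < j then f j k else 0 := by
          simp only [← ite_and, and_iff_right_of_imp le_of_lt]
  rw [hlower, hupper, ← Finset.sum_add_distrib, reFrobInner]
  refine sum_congr rfl fun j _ => ?_
  rw [← Finset.sum_add_distrib]
  refine sum_congr rfl fun k _ => ?_
  rcases le_or_gt k j with hkj | hjk
  · rw [Toep_apply_of_le _ hkj, if_pos hkj, if_neg (not_lt.mpr hkj), add_zero]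
  · rw [Toep_apply_of_lt _ hjk, if_neg (not_le.mpr hjk), if_pos hjk, zero_add,
      Complex.real_inner_conj_right, ← Complex.star_def, hA.apply]

theorem reFrobInner_Toep_of_subdiagTr_eq_zero (hN : 0 < N)
    {A : Matrix (Fin N) (Fin N) ℂ} (hA : A.IsHermitian)
    (hoff : ∀ d : Fin N, d.val ≠ 0 → subdiagTr N A d = 0) (w : Fin N → ℂ) :
    reFrobInner A (Toep N w) = ⟪A.trace, w ⟨0, hN⟩⟫ := by
  have hdiag : ∑ d : Fin N, ⟪subdiagTr N A d, w d⟫ = ⟪A.trace, w ⟨0, hN⟩⟫ := by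
    rw [Fintype.sum_eq_single ⟨0, hN⟩ fun d hd => by
      rw [hoff d fun h => hd (Fin.ext h), inner_zero_left]]
    exact congrArg (⟪·, w ⟨0, hN⟩⟫) (subdiagTr_zero A)
  have hupper : (∑ d : Fin N, if d.val = 0 then 0 else ⟪subdiagTr N A d, w d⟫) = 0 :=
    sum_eq_zero fun d _ => by
      split_ifs with hd
      · rfl
      · rw [hoff d hd, inner_zero_left]
  rw [reFrobInner_Toep hA, hdiag, hupper, add_zero]

end Toeplitz

theorem admm_toeplitz_update_closed_form_general
    (N : ℕ) (hN : 0 < N) (ρ γ : ℝ) (hρ : 0 < ρ)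
    (Ψ₀ Υ₀ : Matrix (Fin N) (Fin N) ℂ)
    (hΨ : Ψ₀.IsHermitian) (hΥ : Υ₀.IsHermitian)
    (ustar : Fin N → ℂ)
    (h0 : ustar ⟨0, hN⟩ =
      ((1 / (N : ℝ) : ℝ) : ℂ) * subdiagTr N (Ψ₀ + ((ρ : ℂ)⁻¹) • Υ₀) 0 -
        ((γ / (2 * N * ρ) : ℝ) : ℂ))
    (hj : ∀ j : Fin N, j.val ≠ 0 → ustar j =
      ((1 / ((N : ℝ) - j.val) : ℝ) : ℂ) * subdiagTr N (Ψ₀ + ((ρ : ℂ)⁻¹) • Υ₀) j.val) :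
    (ustar ⟨0, hN⟩).im = 0 ∧
    ∀ u : Fin N → ℂ, (u ⟨0, hN⟩).im = 0 → u ≠ ustar →
      γ / 2 * (ustar ⟨0, hN⟩).re - (Matrix.trace (Υ₀ * Toep N ustar)).re +
          ρ / 2 * frobSq N (Ψ₀ - Toep N ustar) <
      γ / 2 * (u ⟨0, hN⟩).re - (Matrix.trace (Υ₀ * Toep N u)).re +
          ρ / 2 * frobSq N (Ψ₀ - Toep N u) := by
  set A := Ψ₀ + ((ρ : ℂ)⁻¹) • Υ₀
  have hA : A.IsHermitian := hΨ.add (hΥ.smul (by simp [IsSelfAdjoint]))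
  have hstar0 : (ustar ⟨0, hN⟩).im = 0 := by
    rw [h0, subdiagTr_zero, Complex.sub_im, Complex.im_ofReal_mul, hA.im_trace_eq_zero,
      Complex.ofReal_im, mul_zero, sub_zero]
  refine ⟨hstar0, fun u _ hne => ?_⟩
  set B := Toep N ustar - A
  have hB : B.IsHermitian := (isHermitian_Toep hN hstar0).sub hA
  have hoff : ∀ d : Fin N, d.val ≠ 0 → subdiagTr N B d = 0 := fun d hd =>
    subdiagTr_Toep_sub_eq_zero (hj d hd)
  have htrace : B.trace = ((-(γ / (2 * ρ)) : ℝ) : ℂ) := trace_Toep_sub_eq hN hρ.ne' h0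
  have hcross : reFrobInner B (Toep N u - Toep N ustar) =
      -(γ / (2 * ρ)) * ((u ⟨0, hN⟩).re - (ustar ⟨0, hN⟩).re) := by
    rw [← Toep_sub, reFrobInner_Toep_of_subdiagTr_eq_zero hN hB hoff, htrace, Complex.inner,
      Complex.conj_ofReal, Complex.re_mul_ofReal, Pi.sub_apply, Complex.sub_re, mul_comm]
  have hpos := frobSq_pos (sub_ne_zero.mpr (Toep_injective.ne hne))
  have hexp := frobSq_prox_objective_sub_eq hρ.ne' Ψ₀ Υ₀ (Toep N u) (Toep N ustar)
  rw [hcross, show ρ * (-(γ / (2 * ρ)) * ((u ⟨0, hN⟩).re - (ustar ⟨0, hN⟩).re)) =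
    -(γ / 2) * ((u ⟨0, hN⟩).re - (ustar ⟨0, hN⟩).re) by field_simp] at hexp
  have hquad := mul_pos (half_pos hρ) hpos
  rw [hΥ.re_trace_mul, hΥ.re_trace_mul]
  linarith

/-- Closed form of the ADMM Toeplitz update: on `{u : ℂ^N | u_0 ∈ ℝ}`, the function
`h(u) = (γ/2)u_0 − Re Tr(Υ₀ · Toep(u)) + (ρ/2)‖Ψ₀ − Toep(u)‖_F²` attains its minimum at
the unique point `u*` with `u*_0 = (1/N)Tr_0(Ψ₀ + Υ₀/ρ) − γ/(2Nρ)` and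
`u*_j = (1/(N−j))Tr_j(Ψ₀ + Υ₀/ρ)` for `j = 1,…,N−1`. -/
theorem admm_toeplitz_update_closed_form
    (N : ℕ) (hN : 0 < N) (ρ γ : ℝ) (hρ : 0 < ρ) (hγ : 0 < γ)
    (Ψ₀ Υ₀ : Matrix (Fin N) (Fin N) ℂ)
    (hΨ : Ψ₀.IsHermitian) (hΥ : Υ₀.IsHermitian)
    (ustar : Fin N → ℂ)
    (h0 : ustar ⟨0, hN⟩ =
      ((1 / (N : ℝ) : ℝ) : ℂ) * subdiagTr N (Ψ₀ + ((ρ : ℂ)⁻¹) • Υ₀) 0 -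
        ((γ / (2 * N * ρ) : ℝ) : ℂ))
    (hj : ∀ j : Fin N, j.val ≠ 0 → ustar j =
      ((1 / ((N : ℝ) - j.val) : ℝ) : ℂ) * subdiagTr N (Ψ₀ + ((ρ : ℂ)⁻¹) • Υ₀) j.val) :
    (ustar ⟨0, hN⟩).im = 0 ∧
    ∀ u : Fin N → ℂ, (u ⟨0, hN⟩).im = 0 → u ≠ ustar →
      γ / 2 * (ustar ⟨0, hN⟩).re - (Matrix.trace (Υ₀ * Toep N ustar)).re +
          ρ / 2 * frobSq N (Ψ₀ - Toep N ustar) <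
      γ / 2 * (u ⟨0, hN⟩).re - (Matrix.trace (Υ₀ * Toep N u)).re +
          ρ / 2 * frobSq N (Ψ₀ - Toep N u) :=
  admm_toeplitz_update_closed_form_general N hN ρ γ hρ Ψ₀ Υ₀ hΨ hΥ ustar h0 hj
end
end

section
/- Closed form of the ADMM x-update with batch overlap: let N be a positive integer, Ω = {t_1 < … < t_α} and Ξ = {s_1 < … < s_A} subsets of {0,…,N−1}, ρ > 0, ζ > 0, z̃, e ∈ ℂ^α, x̄ ∈ ℂ^A, and ψ, υ ∈ ℂ^N. Define g(x) = ½‖z̃ − x(Ω) − e‖₂² + (ζ/2)‖x(Ξ) − x̄‖₂² − 2⟨υ, x⟩_ℝ + ρ‖x − ψ‖₂² for x ∈ ℂ^N. Then g attains its minimum over ℂ^N at the unique point x* given coordinatewise as follows: if t = t_j ∈ Ω and t = s_l ∈ Ξ, then x*_t = (z̃_j − e_j + ζ·x̄_l + 2ρ·ψ_t + 2·υ_t)/(2ρ + ζ + 1); if t = s_l ∈ Ξ and t ∉ Ω, then x*_t = (ζ·x̄_l + 2ρ·ψ_t + 2·υ_t)/(2ρ + ζ); if t = t_j ∈ Ω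 and t ∉ Ξ, then x*_t = (z̃_j − e_j + 2ρ·ψ_t + 2·υ_t)/(2ρ + 1); and if t ∉ Ω ∪ Ξ, then x*_t = ψ_t + υ_t/ρ. -/
noncomputable section

/-!
Regrouping the `Ω`- and `Ξ`-terms by the coordinate they touch makes `g` separable:
`g x = ∑ t, φ_t (x t)`, where `φ_t` is a real quadratic in `x t` with leading coefficient
`c_t = ρ + ½ [t ∈ Ω] + (ζ/2) [t ∈ Ξ] > 0`. The prescribed `x*_t` solves the first-order condition
`c_t x*_t = (linear part of φ_t)`, so completing the square gives
`φ_t w - φ_t x*_t = c_t |w - x*_t|²`, and summing over `t` yields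
`g x - g x* = ∑ t, c_t |x t - x*_t|² > 0` for `x ≠ x*`.
-/

open Finset
open scoped InnerProductSpace

section SumOfSquares

variable {E : Type*} [NormedAddCommGroup E] [InnerProductSpace ℝ E]

theorem norm_sub_sq_sub_norm_sub_sq (w m b : E) :
    ‖w - b‖ ^ 2 - ‖m - b‖ ^ 2 = ‖w - m‖ ^ 2 + 2 * ⟪m - b, w - m⟫_ℝ := by
  rw [show w - b = (w - m) + (m - b) by abel, norm_add_sq_real, real_inner_comm]
  ring

theorem sum_mul_norm_sub_sq_sub_sum {ι : Type*} (s : Finset ι) (a : ℝ) (b : ι → E) (w m : E) :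
    ∑ k ∈ s, a * ‖w - b k‖ ^ 2 - ∑ k ∈ s, a * ‖m - b k‖ ^ 2 =
      a * #s * ‖w - m‖ ^ 2 + 2 * a * ⟪∑ k ∈ s, (m - b k), w - m⟫_ℝ := by
  rw [← sum_sub_distrib, sum_inner, card_eq_sum_ones, Nat.cast_sum, mul_sum, sum_mul, mul_sum,
    ← sum_add_distrib]
  refine sum_congr rfl fun k _ => ?_
  rw [← mul_sub, norm_sub_sq_sub_norm_sub_sq]
  push_cast
  ring

end SumOfSquares

theorem Finset.sum_lt_sum_of_strict_min {ι β : Type*} [Fintype ι] (φ : ι → β → ℝ) {m x : ι → β}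
    (hm : ∀ i w, w ≠ m i → φ i (m i) < φ i w) (hx : x ≠ m) :
    ∑ i, φ i (m i) < ∑ i, φ i (x i) := by
  obtain ⟨i, hi⟩ := Function.ne_iff.mp hx
  refine sum_lt_sum (fun j _ => ?_) ⟨i, mem_univ i, hm i _ hi⟩
  by_cases hj : x j = m j
  · rw [hj]
  · exact (hm j _ hj).le

section ADMM

variable {N α A : ℕ} (ι : Fin α → Fin N) (κ : Fin A → Fin N) (ρ ζ : ℝ)
  (ztil e : Fin α → ℂ) (xbar : Fin A → ℂ) (ψ υ : Fin N → ℂ)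

def admmObjective (x : Fin N → ℂ) : ℝ :=
  (1 / 2) * l2sq α (fun j => ztil j - x (ι j) - e j) +
    (ζ / 2) * l2sq A (fun l => x (κ l) - xbar l) -
    2 * rinner N υ x + ρ * l2sq N (fun t => x t - ψ t)

/-- Summing over the fibres of `ι` and `κ` above `t` (at most one point each when they are
injective) avoids choosing a preimage of `t`. -/
def admmCoordCost (t : Fin N) (w : ℂ) : ℝ :=
  ∑ j ∈ univ with ι j = t, (1 / 2) * ‖w - (ztil j - e j)‖ ^ 2 +
    ∑ l ∈ univ with κ l = t, (ζ / 2) * ‖w - xbar l‖ ^ 2 -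
    2 * ⟪w, υ t⟫_ℝ + ρ * ‖w - ψ t‖ ^ 2

def admmCoordWeight (t : Fin N) : ℝ :=
  #{j | ι j = t} / 2 + ζ * #{l | κ l = t} / 2 + ρ

def admmCoordTarget (t : Fin N) : ℂ :=
  1 / 2 * ∑ j ∈ univ with ι j = t, (ztil j - e j) +
    ζ / 2 * ∑ l ∈ univ with κ l = t, xbar l + ρ * ψ t + υ t

variable {ι κ ρ ζ ztil e xbar ψ υ}

theorem admmObjective_eq_sum_admmCoordCost (x : Fin N → ℂ) :
    admmObjective ι κ ρ ζ ztil e xbar ψ υ x =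
      ∑ t, admmCoordCost ι κ ρ ζ ztil e xbar ψ υ t (x t) := by
  have hΩ : ∑ j, ‖ztil j - x (ι j) - e j‖ ^ 2 =
      ∑ t, ∑ j ∈ univ with ι j = t, ‖x t - (ztil j - e j)‖ ^ 2 := by
    rw [← sum_fiberwise univ ι]
    refine sum_congr rfl fun t _ => sum_congr rfl fun j hj => ?_
    rw [(mem_filter.1 hj).2, sub_right_comm, norm_sub_rev]
  have hΞ : ∑ l, ‖x (κ l) - xbar l‖ ^ 2 = ∑ t, ∑ l ∈ univ with κ l = t, ‖x t - xbar l‖ ^ 2 := by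
    rw [← sum_fiberwise univ κ]
    refine sum_congr rfl fun t _ => sum_congr rfl fun l hl => ?_
    rw [(mem_filter.1 hl).2]
  have hυ : rinner N υ x = ∑ t, ⟪x t, υ t⟫_ℝ := by
    simp only [rinner, cinner, Complex.re_sum, Complex.inner]
  simp only [admmObjective, admmCoordCost, l2sq, hΩ, hΞ, hυ, mul_sum, sum_add_distrib,
    sum_sub_distrib]

theorem admmCoordCost_sub_of_stationary (t : Fin N) {m : ℂ}
    (hm : (admmCoordWeight ι κ ρ ζ t : ℂ) * m = admmCoordTarget ι κ ρ ζ ztil e xbar ψ υ t) (w : ℂ) :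
    admmCoordCost ι κ ρ ζ ztil e xbar ψ υ t w - admmCoordCost ι κ ρ ζ ztil e xbar ψ υ t m =
      admmCoordWeight ι κ ρ ζ t * ‖w - m‖ ^ 2 := by
  have hgrad : ∑ j ∈ univ with ι j = t, (m - (ztil j - e j)) +
      ζ • ∑ l ∈ univ with κ l = t, (m - xbar l) + (2 * ρ) • (m - ψ t) - (2 : ℝ) • υ t = 0 := by
    simp only [admmCoordWeight, admmCoordTarget] at hm
    simp only [sum_sub_distrib, sum_const, nsmul_eq_mul, Complex.real_smul] at hm ⊢
    push_cast at hm ⊢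
    linear_combination 2 * hm
  have key := congrArg (⟪·, w - m⟫_ℝ) hgrad
  simp only [inner_add_left, inner_sub_left, real_inner_smul_left, inner_zero_left] at key
  have hΩ := sum_mul_norm_sub_sq_sub_sum {j | ι j = t} (1 / 2) (fun j => ztil j - e j) w m
  have hΞ := sum_mul_norm_sub_sq_sub_sum {l | κ l = t} (ζ / 2) xbar w m
  have hψ := norm_sub_sq_sub_norm_sub_sq w m (ψ t)
  have hυ : ⟪w, υ t⟫_ℝ - ⟪m, υ t⟫_ℝ = ⟪υ t, w - m⟫_ℝ := by
    rw [← inner_sub_left, real_inner_comm]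
  rw [inner_sub_left] at hψ
  simp only [admmCoordCost, admmCoordWeight]
  linear_combination hΩ + hΞ + ρ * hψ - 2 * hυ + key

theorem Function.Injective.filter_eq_singleton {β γ : Type*} [Fintype β] [DecidableEq γ]
    {f : β → γ} (hf : Function.Injective f) {b : β} {c : γ} (h : f b = c) :
    ({x | f x = c} : Finset β) = {b} := by
  subst h
  ext
  simp [hf.eq_iff]

theorem admmCoordWeight_pos (hρ : 0 < ρ) (hζ : 0 ≤ ζ) (t : Fin N) :
    0 < admmCoordWeight ι κ ρ ζ t := by
  unfold admmCoordWeight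
  positivity

theorem admmCoordWeight_mul_eq_admmCoordTarget_of_closed_form
    (hι : Function.Injective ι) (hκ : Function.Injective κ) (hρ : 0 < ρ) (hζ : 0 < ζ)
    {xstar : Fin N → ℂ}
    (hboth : ∀ (j : Fin α) (l : Fin A), ι j = κ l →
      xstar (ι j) = (ztil j - e j + (ζ : ℂ) * xbar l + 2 * (ρ : ℂ) * ψ (ι j) + 2 * υ (ι j)) /
        ((2 * ρ + ζ + 1 : ℝ) : ℂ))
    (hΞonly : ∀ l : Fin A, (∀ j, ι j ≠ κ l) →
      xstar (κ l) = ((ζ : ℂ) * xbar l + 2 * (ρ : ℂ) * ψ (κ l) + 2 * υ (κ l)) /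
        ((2 * ρ + ζ : ℝ) : ℂ))
    (hΩonly : ∀ j : Fin α, (∀ l, κ l ≠ ι j) →
      xstar (ι j) = (ztil j - e j + 2 * (ρ : ℂ) * ψ (ι j) + 2 * υ (ι j)) /
        ((2 * ρ + 1 : ℝ) : ℂ))
    (hneither : ∀ t : Fin N, (∀ j, ι j ≠ t) → (∀ l, κ l ≠ t) →
      xstar t = ψ t + υ t / (ρ : ℂ)) (t : Fin N) :
    (admmCoordWeight ι κ ρ ζ t : ℂ) * xstar t = admmCoordTarget ι κ ρ ζ ztil e xbar ψ υ t := by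
  by_cases hΩ : ∃ j, ι j = t <;> by_cases hΞ : ∃ l, κ l = t
  · obtain ⟨j, hj⟩ := hΩ
    obtain ⟨l, hl⟩ := hΞ
    have hden : ((2 * ρ + ζ + 1 : ℝ) : ℂ) ≠ 0 := by exact_mod_cast (by linarith : 2 * ρ + ζ + 1 ≠ 0)
    rw [admmCoordWeight, admmCoordTarget, hι.filter_eq_singleton hj, hκ.filter_eq_singleton hl]
    subst hj
    rw [hboth j l hl.symm]
    simp only [sum_singleton, card_singleton]
    field_simp
    push_cast
    ring
  · obtain ⟨j, hj⟩ := hΩ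
    push Not at hΞ
    have hden : ((2 * ρ + 1 : ℝ) : ℂ) ≠ 0 := by exact_mod_cast (by linarith : 2 * ρ + 1 ≠ 0)
    rw [admmCoordWeight, admmCoordTarget, hι.filter_eq_singleton hj,
      filter_eq_empty_iff.2 fun l _ => hΞ l]
    subst hj
    rw [hΩonly j hΞ]
    simp only [sum_singleton, card_singleton, sum_empty, card_empty]
    field_simp
    push_cast
    ring
  · obtain ⟨l, hl⟩ := hΞ
    push Not at hΩ
    have hden : ((2 * ρ + ζ : ℝ) : ℂ) ≠ 0 := by exact_mod_cast (by linarith : 2 * ρ + ζ ≠ 0)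
    rw [admmCoordWeight, admmCoordTarget, hκ.filter_eq_singleton hl,
      filter_eq_empty_iff.2 fun j _ => hΩ j]
    subst hl
    rw [hΞonly l hΩ]
    simp only [sum_singleton, card_singleton, sum_empty, card_empty]
    field_simp
    push_cast
    ring
  · push Not at hΩ hΞ
    have hρ' : (ρ : ℂ) ≠ 0 := by exact_mod_cast hρ.ne'
    rw [admmCoordWeight, admmCoordTarget, filter_eq_empty_iff.2 fun j _ => hΩ j,
      filter_eq_empty_iff.2 fun l _ => hΞ l, hneither t hΩ hΞ]
    simp only [sum_empty, card_empty]
    field_simp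
    push_cast
    ring

end ADMM

theorem admm_x_update_overlap_closed_form_general
    (N α A : ℕ)
    (ι : Fin α → Fin N) (hι : StrictMono ι)
    (κ : Fin A → Fin N) (hκ : StrictMono κ)
    (ρ ζ : ℝ) (hρ : 0 < ρ) (hζ : 0 < ζ)
    (ztil e : Fin α → ℂ) (xbar : Fin A → ℂ) (ψ υ : Fin N → ℂ)
    (xstar : Fin N → ℂ)
    (hboth : ∀ (j : Fin α) (l : Fin A), ι j = κ l →
      xstar (ι j) = (ztil j - e j + (ζ : ℂ) * xbar l + 2 * (ρ : ℂ) * ψ (ι j) + 2 * υ (ι j)) /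
        ((2 * ρ + ζ + 1 : ℝ) : ℂ))
    (hΞonly : ∀ l : Fin A, (∀ j, ι j ≠ κ l) →
      xstar (κ l) = ((ζ : ℂ) * xbar l + 2 * (ρ : ℂ) * ψ (κ l) + 2 * υ (κ l)) /
        ((2 * ρ + ζ : ℝ) : ℂ))
    (hΩonly : ∀ j : Fin α, (∀ l, κ l ≠ ι j) →
      xstar (ι j) = (ztil j - e j + 2 * (ρ : ℂ) * ψ (ι j) + 2 * υ (ι j)) /
        ((2 * ρ + 1 : ℝ) : ℂ))
    (hneither : ∀ t : Fin N, (∀ j, ι j ≠ t) → (∀ l, κ l ≠ t) →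
      xstar t = ψ t + υ t / (ρ : ℂ)) :
    ∀ x : Fin N → ℂ, x ≠ xstar →
      (1 / 2) * l2sq α (fun j => ztil j - xstar (ι j) - e j) +
          (ζ / 2) * l2sq A (fun l => xstar (κ l) - xbar l) -
          2 * rinner N υ xstar + ρ * l2sq N (fun t => xstar t - ψ t) <
      (1 / 2) * l2sq α (fun j => ztil j - x (ι j) - e j) +
          (ζ / 2) * l2sq A (fun l => x (κ l) - xbar l) -
          2 * rinner N υ x + ρ * l2sq N (fun t => x t - ψ t) := by
  intro x hx
  have hstat := admmCoordWeight_mul_eq_admmCoordTarget_of_closed_form hι.injective hκ.injective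
    hρ hζ hboth hΞonly hΩonly hneither
  change admmObjective ι κ ρ ζ ztil e xbar ψ υ xstar < admmObjective ι κ ρ ζ ztil e xbar ψ υ x
  rw [admmObjective_eq_sum_admmCoordCost, admmObjective_eq_sum_admmCoordCost]
  refine sum_lt_sum_of_strict_min _ (fun t w hw => ?_) hx
  rw [← sub_pos, admmCoordCost_sub_of_stationary t (hstat t)]
  exact mul_pos (admmCoordWeight_pos hρ hζ.le t) (pow_pos (norm_pos_iff.2 (sub_ne_zero.2 hw)) 2)

/-- Closed form of the ADMM `x`-update with batch overlap: the function
`g(x) = ½‖z̃ − x(Ω) − e‖₂² + (ζ/2)‖x(Ξ) − x̄‖₂² − 2⟨υ,x⟩_ℝ + ρ‖x − ψ‖₂²`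
attains its minimum over `ℂ^N` at the unique point `x*` described coordinatewise
according to membership of the coordinate in `Ω` and `Ξ`. -/
theorem admm_x_update_overlap_closed_form
    (N α A : ℕ) (hN : 0 < N)
    (ι : Fin α → Fin N) (hι : StrictMono ι)
    (κ : Fin A → Fin N) (hκ : StrictMono κ)
    (ρ ζ : ℝ) (hρ : 0 < ρ) (hζ : 0 < ζ)
    (ztil e : Fin α → ℂ) (xbar : Fin A → ℂ) (ψ υ : Fin N → ℂ)
    (xstar : Fin N → ℂ)
    (hboth : ∀ (j : Fin α) (l : Fin A), ι j = κ l →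
      xstar (ι j) = (ztil j - e j + (ζ : ℂ) * xbar l + 2 * (ρ : ℂ) * ψ (ι j) + 2 * υ (ι j)) /
        ((2 * ρ + ζ + 1 : ℝ) : ℂ))
    (hΞonly : ∀ l : Fin A, (∀ j, ι j ≠ κ l) →
      xstar (κ l) = ((ζ : ℂ) * xbar l + 2 * (ρ : ℂ) * ψ (κ l) + 2 * υ (κ l)) /
        ((2 * ρ + ζ : ℝ) : ℂ))
    (hΩonly : ∀ j : Fin α, (∀ l, κ l ≠ ι j) →
      xstar (ι j) = (ztil j - e j + 2 * (ρ : ℂ) * ψ (ι j) + 2 * υ (ι j)) /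
        ((2 * ρ + 1 : ℝ) : ℂ))
    (hneither : ∀ t : Fin N, (∀ j, ι j ≠ t) → (∀ l, κ l ≠ t) →
      xstar t = ψ t + υ t / (ρ : ℂ)) :
    ∀ x : Fin N → ℂ, x ≠ xstar →
      (1 / 2) * l2sq α (fun j => ztil j - xstar (ι j) - e j) +
          (ζ / 2) * l2sq A (fun l => xstar (κ l) - xbar l) -
          2 * rinner N υ xstar + ρ * l2sq N (fun t => xstar t - ψ t) <
      (1 / 2) * l2sq α (fun j => ztil j - x (ι j) - e j) +
          (ζ / 2) * l2sq A (fun l => x (κ l) - xbar l) -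
          2 * rinner N υ x + ρ * l2sq N (fun t => x t - ψ t) :=
  admm_x_update_overlap_closed_form_general N α A ι hι κ hκ ρ ζ hρ hζ ztil e xbar ψ υ xstar hboth
    hΞonly hΩonly hneither
end
end
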